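/- Let Σ_7 be the set of seven Boolean 2×2 matrices {(1 1; 1 1), (1 0; 0 1), (1 0; 1 1), (1 1; 0 1), (0 1; 1 1), (1 1; 1 0), (0 0; 0 0)} with Boolean matrix addition + (entrywise OR) and Boolean matrix multiplication ·. Then (Σ_7,+,·) is an ai-semiring whose multiplicative reduct (Σ_7,·) is a combinatorial inverse semigroup; the natural partial order on (Σ_7,·) is a meet-semilattice, giving a second addition +_nat with x +_nat y := inf{x,y}; and the semiring identity (xy+yx)² ≈ x²+y² is satisfied by (Σ_7, +_nat, ·) but is not satisfied by (Σ_7, +, ·). In particular, (Σ_7,+,·) and (Σ_7,+_nat,·) are ai-semirings with the same multiplicative reduct that do not satisfy the same semiring identities. -/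
import Mathlib


universe u v

/-- Terms in the signature `{+, ·}` over countably many variables. -/
inductive SRTerm : Type
  | var : ℕ → SRTerm
  | add : SRTerm → SRTerm → SRTerm
  | mul : SRTerm → SRTerm → SRTerm

/-- Evaluation of a `{+, ·}`-term under explicit operations and an assignment. -/
def SRTerm.evalOp {S : Type*} (add mul : S → S → S) (ρ : ℕ → S) : SRTerm → S
  | .var i => ρ i
  | .add u v => add (u.evalOp add mul ρ) (v.evalOp add mul ρ)
  | .mul u v => mul (u.evalOp add mul ρ) (v.evalOp add mul ρ)

/-- `(S, add, mul)` is an additively idempotent semiring. -/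
structure IsAiSemiring {S : Type*} (add mul : S → S → S) : Prop where
  add_assoc : ∀ a b c, add (add a b) c = add a (add b c)
  add_comm : ∀ a b, add a b = add b a
  add_idem : ∀ a, add a a = a
  mul_assoc : ∀ a b c, mul (mul a b) c = mul a (mul b c)
  left_distrib : ∀ a b c, mul a (add b c) = add (mul a b) (mul a c)
  right_distrib : ∀ a b c, mul (add a b) c = add (mul a c) (mul b c)

/-- The algebra `(S, add, mul)` satisfies the semiring identity `e.1 ≈ e.2`. -/
def SatSR {S : Type*} (add mul : S → S → S) (e : SRTerm × SRTerm) : Prop :=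
  ∀ ρ : ℕ → S, e.1.evalOp add mul ρ = e.2.evalOp add mul ρ

/-- The subalgebra of `(S, add, mul)` with carrier `T` satisfies the identity `e.1 ≈ e.2`. -/
def SatSROn {S : Type*} (T : Set S) (add mul : S → S → S) (e : SRTerm × SRTerm) : Prop :=
  ∀ ρ : ℕ → S, (∀ i, ρ i ∈ T) → e.1.evalOp add mul ρ = e.2.evalOp add mul ρ

/-- Boolean `2 × 2` matrices. -/
abbrev BM : Type := Matrix (Fin 2) (Fin 2) Bool

/-- Boolean matrix addition (entrywise OR). -/
def bAdd (A B : BM) : BM := Matrix.of fun i j => A i j || B i j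

/-- Boolean matrix multiplication. -/
def bMul (A B : BM) : BM := Matrix.of fun i j => (A i 0 && B 0 j) || (A i 1 && B 1 j)

/-- The seven Boolean matrices of `Σ₇`. -/
def Sigma7 : Set BM :=
  {Matrix.of ![![true, true], ![true, true]],
   Matrix.of ![![true, false], ![false, true]],
   Matrix.of ![![true, false], ![true, true]],
   Matrix.of ![![true, true], ![false, true]],
   Matrix.of ![![false, true], ![true, true]],
   Matrix.of ![![true, true], ![true, false]],
   Matrix.of ![![false, false], ![false, false]]}

/-- The subset `T` of `S` is an ai-semiring under `add` and `mul`. -/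
def IsAiSemiringOn {S : Type*} (T : Set S) (add mul : S → S → S) : Prop :=
  (∀ a ∈ T, ∀ b ∈ T, add a b ∈ T) ∧
  (∀ a ∈ T, ∀ b ∈ T, mul a b ∈ T) ∧
  (∀ a ∈ T, ∀ b ∈ T, ∀ c ∈ T, add (add a b) c = add a (add b c)) ∧
  (∀ a ∈ T, ∀ b ∈ T, add a b = add b a) ∧
  (∀ a ∈ T, add a a = a) ∧
  (∀ a ∈ T, ∀ b ∈ T, ∀ c ∈ T, mul (mul a b) c = mul a (mul b c)) ∧
  (∀ a ∈ T, ∀ b ∈ T, ∀ c ∈ T, mul a (add b c) = add (mul a b) (mul a c)) ∧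
  (∀ a ∈ T, ∀ b ∈ T, ∀ c ∈ T, mul (add a b) c = add (mul a c) (mul b c))

/-- A subset of `(S, mul)` which is a subgroup. -/
def IsSubgroupOn {S : Type*} (mul : S → S → S) (H : Set S) : Prop :=
  H.Nonempty ∧ (∀ a ∈ H, ∀ b ∈ H, mul a b ∈ H) ∧
    ∃ e ∈ H, (∀ a ∈ H, mul e a = a ∧ mul a e = a) ∧
      ∀ a ∈ H, ∃ b ∈ H, mul a b = e ∧ mul b a = e

/-- `z` is the meet of `x` and `y` in `T` with respect to `le`. -/
def IsMeetOn {S : Type*} (T : Set S) (le : S → S → Prop) (x y z : S) : Prop :=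
  le z x ∧ le z y ∧ ∀ w ∈ T, le w x → le w y → le w z

/-- The identity `(xy + yx)² ≈ x² + y²`. -/
def witnessId : SRTerm × SRTerm :=
  (SRTerm.mul (SRTerm.add (SRTerm.mul (.var 0) (.var 1)) (SRTerm.mul (.var 1) (.var 0)))
      (SRTerm.add (SRTerm.mul (.var 0) (.var 1)) (SRTerm.mul (.var 1) (.var 0))),
   SRTerm.add (SRTerm.mul (.var 0) (.var 0)) (SRTerm.mul (.var 1) (.var 1)))

/-! ### Auxiliary definitions -/

/-- Enumeration of the seven matrices of `Σ₇`. -/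
def f7 : Fin 7 → BM :=
  ![Matrix.of ![![true, true], ![true, true]],
    Matrix.of ![![true, false], ![false, true]],
    Matrix.of ![![true, false], ![true, true]],
    Matrix.of ![![true, true], ![false, true]],
    Matrix.of ![![false, true], ![true, true]],
    Matrix.of ![![true, true], ![true, false]],
    Matrix.of ![![false, false], ![false, false]]]

/-- Index of a matrix of `Σ₇` (junk value `0` elsewhere). -/
def g7 (A : BM) : Fin 7 :=
  if A = f7 1 then 1 else if A = f7 2 then 2 else if A = f7 3 then 3 else
  if A = f7 4 then 4 else if A = f7 5 then 5 else if A = f7 6 then 6 else 0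

/-- The inverse operation on `Σ₇`: swap the two non-idempotents, fix the rest. -/
def bInv (A : BM) : BM :=
  if A = f7 4 then f7 5 else if A = f7 5 then f7 4 else A

/-- Meet table of the natural partial order on `Σ₇`. -/
def m7 : Fin 7 → Fin 7 → Fin 7 :=
  ![![0, 0, 0, 0, 0, 0, 6],
    ![0, 1, 2, 3, 0, 0, 6],
    ![0, 2, 2, 0, 0, 0, 6],
    ![0, 3, 0, 3, 0, 0, 6],
    ![0, 0, 0, 0, 4, 0, 6],
    ![0, 0, 0, 0, 0, 5, 6],
    ![6, 6, 6, 6, 6, 6, 6]]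

/-- The meet operation on `Σ₇`. -/
def bAddN (A B : BM) : BM := f7 (m7 (g7 A) (g7 B))

lemma sigma7_eq_range : Sigma7 = Set.range f7 := by
  ext a
  simp only [Sigma7, f7, Set.mem_insert_iff, Set.mem_singleton_iff, Set.mem_range]
  constructor
  · rintro (rfl | rfl | rfl | rfl | rfl | rfl | rfl)
    exacts [⟨0, rfl⟩, ⟨1, rfl⟩, ⟨2, rfl⟩, ⟨3, rfl⟩, ⟨4, rfl⟩, ⟨5, rfl⟩, ⟨6, rfl⟩]
  · rintro ⟨i, rfl⟩
    revert i
    decide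

set_option maxHeartbeats 4000000

lemma combinatorial_aux : ∀ i j k : Fin 7,
    bMul (f7 j) (f7 j) = f7 j → bMul (f7 i) (f7 k) = f7 j → bMul (f7 k) (f7 i) = f7 j →
    bMul (f7 j) (f7 i) = f7 i → f7 i = f7 j := by decide

/-- `(Σ₇, +, ·)` is an ai-semiring whose multiplicative reduct is a
combinatorial inverse semigroup; the natural partial order on `(Σ₇, ·)` has all meets, giving
a second addition `+_nat`; and the identity `(xy + yx)² ≈ x² + y²` holds in `(Σ₇, +_nat, ·)`
but not in `(Σ₇, +, ·)`. In particular, these two ai-semirings have the same multiplicative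
reduct but satisfy different semiring identities. -/
theorem sigma7_two_additions :
    IsAiSemiringOn Sigma7 bAdd bMul ∧
    ∃ inv : BM → BM,
      (∀ a ∈ Sigma7, inv a ∈ Sigma7 ∧
        bMul (bMul a (inv a)) a = a ∧ bMul (bMul (inv a) a) (inv a) = inv a) ∧
      (∀ a ∈ Sigma7, ∀ b ∈ Sigma7,
        bMul (bMul a b) a = a → bMul (bMul b a) b = b → b = inv a) ∧
      (∀ H : Set BM, H ⊆ Sigma7 → IsSubgroupOn bMul H → ∀ a ∈ H, ∀ b ∈ H, a = b) ∧
      ∃ addN : BM → BM → BM,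
        (∀ a ∈ Sigma7, ∀ b ∈ Sigma7, addN a b ∈ Sigma7 ∧
          IsMeetOn Sigma7 (fun x y => x = bMul (bMul x (inv x)) y) a b (addN a b)) ∧
        IsAiSemiringOn Sigma7 addN bMul ∧
        SatSROn Sigma7 addN bMul witnessId ∧
        ¬ SatSROn Sigma7 bAdd bMul witnessId := by
  rw [sigma7_eq_range]
  refine ⟨?_, bInv, ?_, ?_, ?_, bAddN, ?_, ?_, ?_, ?_⟩
  · unfold IsAiSemiringOn
    simp only [Set.forall_mem_range, Set.mem_range]
    refine ⟨?_, ?_, ?_, ?_, ?_, ?_, ?_, ?_⟩ <;> decide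
  · simp only [Set.forall_mem_range, Set.mem_range]
    decide
  · simp only [Set.forall_mem_range]
    decide
  · rintro H hH ⟨-, -, e, heH, hid, hinv⟩ a ha b hb
    have key : ∀ c ∈ H, c = e := by
      intro c hc
      obtain ⟨d, hdH, hcd, hdc⟩ := hinv c hc
      obtain ⟨i, hi⟩ := hH hc
      obtain ⟨j, hj⟩ := hH heH
      obtain ⟨k, hk⟩ := hH hdH
      subst hi hj hk
      exact combinatorial_aux i j k ((hid _ heH).1) hcd hdc ((hid _ hc).1)
    rw [key a ha, key b hb]
  · simp only [IsMeetOn, Set.forall_mem_range]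
    simp only [Set.mem_range]
    decide
  · unfold IsAiSemiringOn
    simp only [Set.forall_mem_range, Set.mem_range]
    refine ⟨?_, ?_, ?_, ?_, ?_, ?_, ?_, ?_⟩ <;> decide
  · intro ρ hρ
    obtain ⟨i, hi⟩ := hρ 0
    obtain ⟨j, hj⟩ := hρ 1
    simp only [witnessId, SRTerm.evalOp, ← hi, ← hj]
    clear hi hj hρ
    revert i j
    decide
  · intro h
    have hρ : ∀ i : ℕ, (fun n : ℕ => if n = 0 then f7 6 else f7 1) i ∈ Set.range f7 := by
      intro i
      by_cases hi : i = 0 <;> simp [hi]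
    have := h _ hρ
    simp only [witnessId, SRTerm.evalOp] at this
    exact absurd this (by decide)
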